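/- arXiv:2505.11050 — 3 statements merged into one kernel-verified Lean document; each statement's English description precedes it below -/
import Mathlib

section
/- Every aggregate-combine layer, which relabels each node n of an ℝ^p-labeled graph G by comb(G(n), agg{{G(m) : m an out-neighbor of n}}) where agg acts on finite multisets of labels, is invariant under graded bisimulation. -/
/-- A finite labeled directed graph over label set `X`, with decidable edges. -/
structure LGraph (X : Type) where
  Node : Type
  fin : Fintype Node
  edge : Node → Node → Prop
  dec : DecidableRel edge
  label : Node → X

/-- The set of out-neighbours of a node. -/
def outN {X : Type} (G : LGraph X) (n : G.Node) : Set G.Node := {m | G.edge n m}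

/-- `Z` is a graded bisimulation between `G` and `H`. -/
def IsGBisim {X : Type} (G H : LGraph X) (Z : G.Node → H.Node → Prop) : Prop :=
  ∀ n m, Z n m →
    G.label n = H.label m ∧
    ∃ f : outN G n → outN H m, Function.Bijective f ∧ ∀ i : outN G n, Z i.1 (f i).1

/-- Pointed graphs `(G,n)` and `(H,m)` are graded bisimilar. -/
def GBisimilar {X : Type} (G H : LGraph X) (n : G.Node) (m : H.Node) : Prop :=
  ∃ Z, IsGBisim G H Z ∧ Z n m

/-- A label transformer keeps nodes and edges, changing only labels. -/
def applyLT {X Y : Type} (f : (G : LGraph X) → G.Node → Y) (G : LGraph X) : LGraph Y :=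
  { Node := G.Node, fin := G.fin, edge := G.edge, dec := G.dec, label := f G }

/-- Invariance of a label transformer under graded bisimulation. -/
def LTInvariant {X Y : Type} (f : (G : LGraph X) → G.Node → Y) : Prop :=
  ∀ (G H : LGraph X) (n : G.Node) (m : H.Node),
    GBisimilar G H n m → GBisimilar (applyLT f G) (applyLT f H) n m

/-- The finite multiset of labels of the out-neighbours of `n`. -/
def nbrMultiset {X : Type} (G : LGraph X) (n : G.Node) : Multiset X :=
  letI := G.fin
  letI : DecidablePred (fun m => G.edge n m) := fun m => G.dec n m
  ((Finset.univ.filter (fun m => G.edge n m)).val.map G.label)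

lemma nbrMultiset_eq_map_univ {X : Type} (G : LGraph X) (n : G.Node)
    [inst : Fintype (outN G n)] :
    nbrMultiset G n = (Finset.univ.val : Multiset (outN G n)).map (fun i => G.label i.1) := by
  let := G.fin
  let : DecidablePred (G.edge n) := G.dec n
  -- `nbrMultiset` is built from the subtype instance; any other instance is equal to it
  obtain rfl : inst = Subtype.fintype (G.edge n) := Subsingleton.elim _ _
  rw [nbrMultiset, ← Finset.univ_val_map_subtype_val, Multiset.map_map]
  rfl

lemma IsGBisim.nbrMultiset_eq {X : Type} {G H : LGraph X} {Z : G.Node → H.Node → Prop}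
    (hZ : IsGBisim G H Z) {n : G.Node} {m : H.Node} (hnm : Z n m) :
    nbrMultiset G n = nbrMultiset H m := by
  obtain ⟨f, hf, hZf⟩ := (hZ n m hnm).2
  let := G.fin
  let := H.fin
  let := Fintype.ofFinite (outN G n)
  let := Fintype.ofFinite (outN H m)
  rw [nbrMultiset_eq_map_univ, nbrMultiset_eq_map_univ,
    ← Multiset.map_univ_val_equiv (Equiv.ofBijective f hf), Multiset.map_map]
  exact Multiset.map_congr rfl fun i _ => (hZ i (f i) (hZf i)).1

lemma IsGBisim.applyLT {X Y : Type} {f : (G : LGraph X) → G.Node → Y} {G H : LGraph X}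
    {Z : G.Node → H.Node → Prop} (hZ : IsGBisim G H Z) (hf : ∀ n m, Z n m → f G n = f H m) :
    IsGBisim (applyLT f G) (applyLT f H) Z := fun n m hnm =>
  ⟨hf n m hnm, (hZ n m hnm).2⟩

/-- Every aggregate-combine layer is invariant under graded bisimulation. -/
theorem acLayer_invariant (p h q : ℕ)
    (agg : Multiset (Fin p → ℝ) → (Fin h → ℝ))
    (comb : (Fin p → ℝ) → (Fin h → ℝ) → (Fin q → ℝ)) :
    LTInvariant (fun (G : LGraph (Fin p → ℝ)) (n : G.Node) =>
      comb (G.label n) (agg (nbrMultiset G n))) := by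
  rintro G H n m ⟨Z, hZ, hnm⟩
  refine ⟨Z, hZ.applyLT fun a b hab => ?_, hnm⟩
  simp only [(hZ a b hab).1, hZ.nbrMultiset_eq hab]
end

section
/- If φ is globally k-stable on (G, V) for some k ≥ 1, then its uniform k-approximation equals its true semantics: ⟦φ^{(k)}⟧_{G,V} = ⟦φ⟧_{G,V}. -/
/-- Formulas of the graded modal μ-calculus in negation normal form, over
proposition symbols `P` and variables `X`. -/
inductive Form (P X : Type) : Type
  | prop : P → Form P X
  | nprop : P → Form P X
  | var : X → Form P X
  | and : Form P X → Form P X → Form P X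
  | or : Form P X → Form P X → Form P X
  | dia : ℕ → Form P X → Form P X   -- ◇_k φ : at least k out-neighbours satisfy φ
  | box : ℕ → Form P X → Form P X   -- □_k φ : strictly fewer than k out-neighbours fail φ
  | mu : X → Form P X → Form P X
  | nu : X → Form P X → Form P X

variable {P X N : Type} [DecidableEq X]

/-- Iteration of a set operator from a given starting set. -/
def fpIter (f : Set N → Set N) (init : Set N) : ℕ → Set N
  | 0 => init
  | i + 1 => f (fpIter f init i)

/-- True (Knaster–Tarski) semantics of μ-calculus formulas on a graph with
edge relation `E` and labeling `lab`, under valuation `V`. -/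
def sem (E : N → N → Prop) (lab : N → P → Prop) : Form P X → (X → Set N) → Set N
  | .prop p, _ => {n | lab n p}
  | .nprop p, _ => {n | ¬ lab n p}
  | .var x, V => V x
  | .and φ ψ, V => sem E lab φ V ∩ sem E lab ψ V
  | .or φ ψ, V => sem E lab φ V ∪ sem E lab ψ V
  | .dia c φ, V => {n | c ≤ ({m | E n m} ∩ sem E lab φ V).ncard}
  | .box c φ, V => {n | ({m | E n m} \ sem E lab φ V).ncard < c}
  | .mu x φ, V => ⋂₀ {S | sem E lab φ (Function.update V x S) ⊆ S}
  | .nu x φ, V => ⋃₀ {S | S ⊆ sem E lab φ (Function.update V x S)}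

/-- Uniform `k`-approximation semantics: every fixpoint is iterated exactly `k`
times (least fixpoints from `∅`, greatest fixpoints from `univ`). -/
def asem (E : N → N → Prop) (lab : N → P → Prop) (k : ℕ) :
    Form P X → (X → Set N) → Set N
  | .prop p, _ => {n | lab n p}
  | .nprop p, _ => {n | ¬ lab n p}
  | .var x, V => V x
  | .and φ ψ, V => asem E lab k φ V ∩ asem E lab k ψ V
  | .or φ ψ, V => asem E lab k φ V ∪ asem E lab k ψ V
  | .dia c φ, V => {n | c ≤ ({m | E n m} ∩ asem E lab k φ V).ncard}
  | .box c φ, V => {n | ({m | E n m} \ asem E lab k φ V).ncard < c}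
  | .mu x φ, V => fpIter (fun S => asem E lab k φ (Function.update V x S)) ∅ k
  | .nu x φ, V => fpIter (fun S => asem E lab k φ (Function.update V x S)) Set.univ k

/-- Free variables of a formula. -/
def freeVars : Form P X → Set X
  | .prop _ => ∅
  | .nprop _ => ∅
  | .var x => {x}
  | .and φ ψ => freeVars φ ∪ freeVars ψ
  | .or φ ψ => freeVars φ ∪ freeVars ψ
  | .dia _ φ => freeVars φ
  | .box _ φ => freeVars φ
  | .mu x φ => freeVars φ \ {x}
  | .nu x φ => freeVars φ \ {x}

/-- Pointwise `k`-stability of a formula on `(G, V, n)`. -/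
def stableAt (E : N → N → Prop) (lab : N → P → Prop) (k : ℕ) :
    Form P X → (X → Set N) → N → Prop
  | .prop _, _, _ => True
  | .nprop _, _, _ => True
  | .var _, _, _ => True
  | .and φ ψ, V, n => stableAt E lab k φ V n ∧ stableAt E lab k ψ V n
  | .or φ ψ, V, n => stableAt E lab k φ V n ∧ stableAt E lab k ψ V n
  | .dia _ φ, V, n => stableAt E lab k φ V n
  | .box _ φ, V, n => stableAt E lab k φ V n
  | .mu x ψ, V, n =>
      ((n ∈ fpIter (fun S => asem E lab k ψ (Function.update V x S)) ∅ k) ↔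
        (n ∈ fpIter (fun S => asem E lab k ψ (Function.update V x S)) ∅ (k - 1))) ∧
      ∀ i < k, stableAt E lab k ψ
        (Function.update V x
          (fpIter (fun S => asem E lab k ψ (Function.update V x S)) ∅ i)) n
  | .nu x ψ, V, n =>
      ((n ∈ fpIter (fun S => asem E lab k ψ (Function.update V x S)) Set.univ k) ↔
        (n ∈ fpIter (fun S => asem E lab k ψ (Function.update V x S)) Set.univ (k - 1))) ∧
      ∀ i < k, stableAt E lab k ψ
        (Function.update V x
          (fpIter (fun S => asem E lab k ψ (Function.update V x S)) Set.univ i)) n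

/-- Global `k`-stability of a formula on `(G, V)`. -/
def gStable (E : N → N → Prop) (lab : N → P → Prop) (k : ℕ) :
    Form P X → (X → Set N) → Prop
  | .prop _, _ => True
  | .nprop _, _ => True
  | .var _, _ => True
  | .and φ ψ, V => gStable E lab k φ V ∧ gStable E lab k ψ V
  | .or φ ψ, V => gStable E lab k φ V ∧ gStable E lab k ψ V
  | .dia _ φ, V => gStable E lab k φ V
  | .box _ φ, V => gStable E lab k φ V
  | .mu x ψ, V =>
      fpIter (fun S => asem E lab k ψ (Function.update V x S)) ∅ k =
        fpIter (fun S => asem E lab k ψ (Function.update V x S)) ∅ (k - 1) ∧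
      ∀ i < k, gStable E lab k ψ
        (Function.update V x
          (fpIter (fun S => asem E lab k ψ (Function.update V x S)) ∅ i))
  | .nu x ψ, V =>
      fpIter (fun S => asem E lab k ψ (Function.update V x S)) Set.univ k =
        fpIter (fun S => asem E lab k ψ (Function.update V x S)) Set.univ (k - 1) ∧
      ∀ i < k, gStable E lab k ψ
        (Function.update V x
          (fpIter (fun S => asem E lab k ψ (Function.update V x S)) Set.univ i))

/-- `(j,k)`-stability of a fixpoint formula on `(G, V, n)` (trivially true on
non-fixpoint formulas). -/
def jkStable (E : N → N → Prop) (lab : N → P → Prop) (j k : ℕ) :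
    Form P X → (X → Set N) → N → Prop
  | .mu x ψ, V, n =>
      ∀ i < j, stableAt E lab k ψ
        (Function.update V x
          (fpIter (fun S => asem E lab k ψ (Function.update V x S)) ∅ i)) n
  | .nu x ψ, V, n =>
      ∀ i < j, stableAt E lab k ψ
        (Function.update V x
          (fpIter (fun S => asem E lab k ψ (Function.update V x S)) Set.univ i)) n
  | _, _, _ => True

/-!
By induction on `φ`. Away from fixpoints both semantics are built by the same
operations. At `μx.ψ`, global stability says two things: the approximating operator
`f S = ⟦ψ⟧^(k)[x ↦ S]` agrees with the true operator `g S = ⟦ψ⟧[x ↦ S]` along the first `k`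
iterates from `∅` (induction hypothesis), and those iterates have stopped growing. Hence
`T = fᵏ⁻¹ ∅ = gᵏ⁻¹ ∅` is a fixpoint of `g`, while every prefixed point of the monotone `g`
contains all of its iterates from `∅`; so `T` is the least fixpoint. `νx.ψ` is the order dual.
-/

theorem fpIter_eq_iterate (f : Set N → Set N) (init : Set N) (i : ℕ) :
    fpIter f init i = f^[i] init := by
  induction i with
  | zero => rfl
  | succ i ih => rw [Function.iterate_succ_apply', ← ih]; rfl

theorem Monotone.iterate_bot_le_of_map_le {α : Type*} [Preorder α] [OrderBot α] {g : α → α}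
    (hg : Monotone g) {a : α} (ha : g a ≤ a) (n : ℕ) : g^[n] ⊥ ≤ a := by
  induction n with
  | zero => exact bot_le
  | succ n ih => rw [Function.iterate_succ_apply']; exact (hg ih).trans ha

theorem iterate_eq_iterate_of_map_eq {α : Type*} {f g : α → α} {a : α} {k : ℕ}
    (hagree : ∀ i < k, f (f^[i] a) = g (f^[i] a)) : ∀ i ≤ k, f^[i] a = g^[i] a := by
  intro i hi
  induction i with
  | zero => rfl
  | succ i ih =>
    rw [Function.iterate_succ_apply', Function.iterate_succ_apply', ← ih (by omega), hagree i hi]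

theorem iterate_bot_eq_sInf_of_stable {α : Type*} [CompleteLattice α] {f g : α → α}
    (hg : Monotone g) {k : ℕ} (hagree : ∀ i < k + 1, f (f^[i] ⊥) = g (f^[i] ⊥))
    (hfix : f^[k + 1] ⊥ = f^[k] ⊥) : f^[k + 1] ⊥ = sInf {a | g a ≤ a} := by
  have hgk : f^[k] ⊥ = g^[k] ⊥ := iterate_eq_iterate_of_map_eq hagree k (by omega)
  have hfixed : g (f^[k] ⊥) = f^[k] ⊥ := by
    rw [← hagree k (by omega), ← Function.iterate_succ_apply' f k ⊥, hfix]
  rw [hfix]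
  refine le_antisymm (le_sInf fun a ha => ?_) (sInf_le hfixed.le)
  rw [hgk]
  exact hg.iterate_bot_le_of_map_le ha k

theorem iterate_top_eq_sSup_of_stable {α : Type*} [CompleteLattice α] {f g : α → α}
    (hg : Monotone g) {k : ℕ} (hagree : ∀ i < k + 1, f (f^[i] ⊤) = g (f^[i] ⊤))
    (hfix : f^[k + 1] ⊤ = f^[k] ⊤) : f^[k + 1] ⊤ = sSup {a | a ≤ g a} :=
  iterate_bot_eq_sInf_of_stable (α := αᵒᵈ) hg.dual hagree hfix

-- `ncard` is `0` on infinite sets, so the graded modalities are monotone only on finite graphs.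
theorem sem_mono [Finite N] (E : N → N → Prop) (lab : N → P → Prop) (φ : Form P X) :
    Monotone (sem E lab φ) := by
  induction φ with
  | prop | nprop => exact fun _ _ _ => le_rfl
  | var x => exact fun _ _ h => h x
  | and φ ψ ihφ ihψ => exact fun _ _ h => Set.inter_subset_inter (ihφ h) (ihψ h)
  | or φ ψ ihφ ihψ => exact fun _ _ h => Set.union_subset_union (ihφ h) (ihψ h)
  | dia c φ ih =>
    exact fun _ _ h n hn => hn.trans <|
      Set.ncard_le_ncard (Set.inter_subset_inter_right _ (ih h)) (Set.toFinite _)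
  | box c φ ih =>
    exact fun _ _ h n hn => lt_of_le_of_lt
      (Set.ncard_le_ncard (Set.sdiff_subset_sdiff_right (ih h)) (Set.toFinite _)) hn
  | mu x φ ih =>
    exact fun _ _ h => Set.sInter_subset_sInter fun S hS =>
      (ih (update_le_update_iff.2 ⟨le_rfl, fun y _ => h y⟩)).trans hS
  | nu x φ ih =>
    exact fun _ _ h => Set.sUnion_subset_sUnion fun S hS =>
      hS.trans (ih (update_le_update_iff.2 ⟨le_rfl, fun y _ => h y⟩))

/-- If `φ` is globally `k`-stable on `(G,V)` then the uniform `k`-approximation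
equals the true semantics. -/
theorem gStable_approx_eq_sem [Fintype N] (E : N → N → Prop) (lab : N → P → Prop)
    (k : ℕ) (hk : 1 ≤ k) (φ : Form P X) (V : X → Set N)
    (h : gStable E lab k φ V) :
    asem E lab k φ V = sem E lab φ V := by
  obtain ⟨k, rfl⟩ := Nat.exists_eq_add_of_le' hk
  induction φ generalizing V with
  | prop | nprop | var => rfl
  | and φ ψ ihφ ihψ | or φ ψ ihφ ihψ => simp only [asem, sem, ihφ V h.1, ihψ V h.2]
  | dia c φ ih | box c φ ih => simp only [asem, sem, ih V h]
  | mu x ψ ih =>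
    obtain ⟨hfix, hstable⟩ := h
    simp only [fpIter_eq_iterate, Nat.add_sub_cancel] at hfix hstable
    rw [asem, sem, fpIter_eq_iterate]
    exact iterate_bot_eq_sInf_of_stable (sem_mono E lab ψ |>.comp Function.update_mono)
      (fun i hi => ih _ (hstable i hi)) hfix
  | nu x ψ ih =>
    obtain ⟨hfix, hstable⟩ := h
    simp only [fpIter_eq_iterate, Nat.add_sub_cancel] at hfix hstable
    rw [asem, sem, fpIter_eq_iterate]
    exact iterate_top_eq_sSup_of_stable (sem_mono E lab ψ |>.comp Function.update_mono)
      (fun i hi => ih _ (hstable i hi)) hfix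
end

section
/- Let α = πX.ψ be a fixpoint subformula, k ≥ 1, and n a node of G. If (i) n ∈ ⟦α^{(k)}⟧_{G,V} iff n ∈ ⟦π^{k-1}X.ψ^{(k)}⟧_{G,V}, (ii) α is (k-1,k)-stable on (G,V,n), (iii) V(X) = ⟦π^{k-1}X.ψ^{(k)}⟧_{G,V}, and (iv) ψ is k-stable on (G,V,n), then α is k-stable on (G,V,n). -/
variable {P X N : Type} [DecidableEq X]

/-- The fixpoint formula `πX.ψ`, where `π` is `μ` if `isMu` and `ν` otherwise. -/
def mkFp (isMu : Bool) (x : X) (ψ : Form P X) : Form P X :=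
  if isMu then Form.mu x ψ else Form.nu x ψ

/-- The starting set of the fixpoint iteration: `∅` for `μ`, `univ` for `ν`. -/
def fpInit (N : Type) (isMu : Bool) : Set N :=
  if isMu then ∅ else Set.univ

/-! Unfolding `k`-stability of `πX.ψ` at `n`: the condition on the outer iteration is (i); stability
of `ψ` at the approximants `π^i` is (ii) for `i < k - 1`, and (iv) for `i = k - 1`, because by (iii)
updating `V` at `X` with `π^{k-1}` leaves `V` unchanged. -/

section Fixpoint

variable (E : N → N → Prop) (lab : N → P → Prop) (isMu : Bool) (x : X) (ψ : Form P X)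
  (V : X → Set N) (n : N)

theorem asem_mkFp (k : ℕ) :
    asem E lab k (mkFp isMu x ψ) V =
      fpIter (fun S => asem E lab k ψ (Function.update V x S)) (fpInit N isMu) k := by
  cases isMu <;> rfl

theorem stableAt_mkFp_iff (k : ℕ) :
    stableAt E lab k (mkFp isMu x ψ) V n ↔
      ((n ∈ fpIter (fun S => asem E lab k ψ (Function.update V x S)) (fpInit N isMu) k) ↔
        n ∈ fpIter (fun S => asem E lab k ψ (Function.update V x S)) (fpInit N isMu) (k - 1)) ∧
      ∀ i < k, stableAt E lab k ψ (Function.update V x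
        (fpIter (fun S => asem E lab k ψ (Function.update V x S)) (fpInit N isMu) i)) n := by
  cases isMu <;> rfl

theorem jkStable_mkFp_iff (j k : ℕ) :
    jkStable E lab j k (mkFp isMu x ψ) V n ↔
      ∀ i < j, stableAt E lab k ψ (Function.update V x
        (fpIter (fun S => asem E lab k ψ (Function.update V x S)) (fpInit N isMu) i)) n := by
  cases isMu <;> rfl

end Fixpoint

theorem stableAt_fixpoint_of_general (E : N → N → Prop) (lab : N → P → Prop)
    (isMu : Bool) (x : X) (ψ : Form P X) (k : ℕ)
    (V : X → Set N) (n : N)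
    (h1 : (n ∈ asem E lab k (mkFp isMu x ψ) V) ↔
      n ∈ fpIter (fun S => asem E lab k ψ (Function.update V x S)) (fpInit N isMu) (k - 1))
    (h2 : jkStable E lab (k - 1) k (mkFp isMu x ψ) V n)
    (h3 : V x = fpIter (fun S => asem E lab k ψ (Function.update V x S)) (fpInit N isMu) (k - 1))
    (h4 : stableAt E lab k ψ V n) :
    stableAt E lab k (mkFp isMu x ψ) V n := by
  rw [asem_mkFp] at h1
  rw [jkStable_mkFp_iff] at h2
  refine (stableAt_mkFp_iff E lab isMu x ψ V n k).2 ⟨h1, fun i hi => ?_⟩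
  rcases (Nat.le_sub_one_of_lt hi).lt_or_eq with hi | rfl
  · exact h2 i hi
  · rwa [← h3, Function.update_eq_self]

/-- Sufficient conditions for `k`-stability of a fixpoint formula `α = πX.ψ`
at a node `n`. -/
theorem stableAt_fixpoint_of [Fintype N] (E : N → N → Prop) (lab : N → P → Prop)
    (isMu : Bool) (x : X) (ψ : Form P X) (k : ℕ) (hk : 1 ≤ k)
    (V : X → Set N) (n : N)
    (h1 : (n ∈ asem E lab k (mkFp isMu x ψ) V) ↔
      n ∈ fpIter (fun S => asem E lab k ψ (Function.update V x S)) (fpInit N isMu) (k - 1))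
    (h2 : jkStable E lab (k - 1) k (mkFp isMu x ψ) V n)
    (h3 : V x = fpIter (fun S => asem E lab k ψ (Function.update V x S)) (fpInit N isMu) (k - 1))
    (h4 : stableAt E lab k ψ V n) :
    stableAt E lab k (mkFp isMu x ψ) V n :=
  stableAt_fixpoint_of_general E lab isMu x ψ k V n h1 h2 h3 h4
end
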